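/- arXiv:2509.17358 — 3 statements merged into one kernel-verified Lean document; each statement's English description precedes it below -/
import Mathlib

section
/- For ℓ ≥ 3 and k ≥ 2, defining β_{k,ℓ} = C(N_{k,ℓ}-2, ℓ) · (N_{k,ℓ}-ℓ-2)! / [ (N_{k,ℓ-1}-1)! · (N_{k,ℓ-1}!)^{k-2} · (N_{k,ℓ-2}-1)! · (N_{k,ℓ-2}!)^{k-2} · ∏_{i=3}^{ℓ-1} (N_{k,ℓ-i}!)^{k-1} ] · A_ℓ, the recursion T_{k,ℓ} ≤ β_{k,ℓ} · ∏_{i=1}^{ℓ-1} T_{k,i}^{k-1} together with T_{k,1} = 1, T_{k,2} ≤ k-1 implies the closed form T_{k,ℓ} ≤ (k-1)^{(k-1)k^{ℓ-3}} · β_{k,ℓ} · ∏_{i=1}^{ℓ-3} β_{k,ℓ-i}^{(k-1)k^{i-1}}. -/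
/-- `Ncount k ℓ = (k^ℓ - 1)/(k - 1)`. -/
def Ncount (k l : ℕ) : ℕ := (k ^ l - 1) / (k - 1)

/-- A permutation `f` of `Fin n` is alternating (up-down). -/
def IsAlt (n : ℕ) (f : Equiv.Perm (Fin n)) : Prop :=
  ∀ (i : ℕ) (h : i + 1 < n),
    if i % 2 = 0 then f ⟨i, Nat.lt_of_succ_lt h⟩ < f ⟨i + 1, h⟩
    else f ⟨i + 1, h⟩ < f ⟨i, Nat.lt_of_succ_lt h⟩

/-- The Euler zigzag number `A_n`. -/
noncomputable def zigzagNum (n : ℕ) : ℕ := Nat.card {f : Equiv.Perm (Fin n) // IsAlt n f}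

/-- `β_{k,ℓ} = C(N_{k,ℓ}-2, ℓ) · (N_{k,ℓ}-ℓ-2)! /
[(N_{k,ℓ-1}-1)!·(N_{k,ℓ-1}!)^{k-2}·(N_{k,ℓ-2}-1)!·(N_{k,ℓ-2}!)^{k-2}·
∏_{i=3}^{ℓ-1}(N_{k,ℓ-i}!)^{k-1}] · A_ℓ`. -/
noncomputable def betaR (k l : ℕ) : ℝ :=
  (Nat.choose (Ncount k l - 2) l : ℝ) * ((Ncount k l - l - 2).factorial : ℝ) /
    (((Ncount k (l - 1) - 1).factorial : ℝ) *
      ((Ncount k (l - 1)).factorial : ℝ) ^ (k - 2) *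
      ((Ncount k (l - 2) - 1).factorial : ℝ) *
      ((Ncount k (l - 2)).factorial : ℝ) ^ (k - 2) *
      ∏ i ∈ Finset.Icc 3 (l - 1), ((Ncount k (l - i)).factorial : ℝ) ^ (k - 1)) *
    (zigzagNum l : ℝ)

/-!
With `e = c = k - 1`, let `S n` be the factor multiplying `β (n + 3)` in the closed form. It
satisfies `S 0 = c ^ e` and `S (n + 1) = S n ^ (e + 1) * β (n + 3) ^ e`, which is how
`P n = ∏_{i ≤ n + 2} T i ^ e` grows once `T (n + 3)` is replaced by its bound `β (n + 3) * P n`: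
`P (n + 1) = P n * T (n + 3) ^ e ≤ P n * (β (n + 3) * P n) ^ e`. So `P n ≤ S n` by induction, and
`T (n + 3) ≤ β (n + 3) * P n ≤ β (n + 3) * S n`.
-/

open Finset

-- `n` stands for `ℓ - 3`, and the product index `i` is the paper's `i - 1`.
noncomputable def boundFactor (c : ℝ) (β : ℕ → ℝ) (e n : ℕ) : ℝ :=
  c ^ (e * (e + 1) ^ n) * ∏ i ∈ range n, β (n + 2 - i) ^ (e * (e + 1) ^ i)

lemma boundFactor_zero (c : ℝ) (β : ℕ → ℝ) (e : ℕ) : boundFactor c β e 0 = c ^ e := by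
  simp [boundFactor]

lemma boundFactor_succ (c : ℝ) (β : ℕ → ℝ) (e n : ℕ) :
    boundFactor c β e (n + 1) = boundFactor c β e n ^ (e + 1) * β (n + 3) ^ e := by
  have hprod : ∏ i ∈ range n, β (n + 1 + 2 - (i + 1)) ^ (e * (e + 1) ^ (i + 1)) =
      (∏ i ∈ range n, β (n + 2 - i) ^ (e * (e + 1) ^ i)) ^ (e + 1) := by
    rw [← prod_pow]
    refine prod_congr rfl fun i _ => ?_
    rw [← pow_mul, pow_succ, mul_assoc]
    congr 2
    omega
  simp only [boundFactor, prod_range_succ', hprod, pow_zero, mul_one, Nat.sub_zero]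
  rw [pow_succ, ← mul_assoc, pow_mul]
  ring

lemma boundFactor_eq_prod_Icc (c : ℝ) (β : ℕ → ℝ) (e n : ℕ) :
    boundFactor c β e n =
      c ^ (e * (e + 1) ^ n) * ∏ i ∈ Icc 1 n, β (n + 3 - i) ^ (e * (e + 1) ^ (i - 1)) := by
  rw [boundFactor, ← Ico_add_one_right_eq_Icc, prod_Ico_eq_prod_range, Nat.add_sub_cancel]
  congr 1
  refine prod_congr rfl fun i _ => ?_
  rw [show n + 3 - (1 + i) = n + 2 - i by omega, Nat.add_sub_cancel_left]

section

variable {T β : ℕ → ℝ} {c : ℝ} {e : ℕ}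

lemma prod_pow_le_boundFactor (hT : ∀ i, 1 ≤ i → 0 ≤ T i) (hβ : ∀ l, 0 ≤ β l) (h1 : T 1 ≤ 1)
    (h2 : T 2 ≤ c) (hrec : ∀ n, T (n + 3) ≤ β (n + 3) * ∏ i ∈ Icc 1 (n + 2), T i ^ e) (n : ℕ) :
    ∏ i ∈ Icc 1 (n + 2), T i ^ e ≤ boundFactor c β e n := by
  induction n with
  | zero =>
    rw [zero_add, prod_Icc_succ_top one_le_two, Icc_self, prod_singleton, boundFactor_zero,
      ← one_mul (c ^ e)]
    exact mul_le_mul (pow_le_one₀ (hT 1 le_rfl) h1) (pow_le_pow_left₀ (hT 2 one_le_two) h2 _)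
      (pow_nonneg (hT 2 one_le_two) _) zero_le_one
  | succ n ih =>
    have hprod_nonneg : 0 ≤ ∏ i ∈ Icc 1 (n + 2), T i ^ e :=
      prod_nonneg fun i hi => pow_nonneg (hT i (mem_Icc.1 hi).1) _
    have hnext : T (n + 3) ^ e ≤ (β (n + 3) * boundFactor c β e n) ^ e :=
      pow_le_pow_left₀ (hT _ (by omega))
        ((hrec n).trans (mul_le_mul_of_nonneg_left ih (hβ _))) _
    calc ∏ i ∈ Icc 1 (n + 1 + 2), T i ^ e
        = (∏ i ∈ Icc 1 (n + 2), T i ^ e) * T (n + 3) ^ e := prod_Icc_succ_top (by omega) _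
      _ ≤ boundFactor c β e n * (β (n + 3) * boundFactor c β e n) ^ e :=
        mul_le_mul ih hnext (pow_nonneg (hT _ (by omega)) _) (hprod_nonneg.trans ih)
      _ = boundFactor c β e (n + 1) := by rw [boundFactor_succ]; ring

lemma le_mul_boundFactor (hT : ∀ i, 1 ≤ i → 0 ≤ T i) (hβ : ∀ l, 0 ≤ β l) (h1 : T 1 ≤ 1)
    (h2 : T 2 ≤ c) (hrec : ∀ n, T (n + 3) ≤ β (n + 3) * ∏ i ∈ Icc 1 (n + 2), T i ^ e) (n : ℕ) :
    T (n + 3) ≤ β (n + 3) * boundFactor c β e n :=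
  (hrec n).trans
    (mul_le_mul_of_nonneg_left (prod_pow_le_boundFactor hT hβ h1 h2 hrec n) (hβ _))

end

lemma betaR_nonneg (k l : ℕ) : 0 ≤ betaR k l := by
  unfold betaR; positivity

theorem stmt5_general (k : ℕ) (T : ℕ → ℝ)
    (hpos : ∀ i, 1 ≤ i → 0 < T i) (h1 : T 1 = 1) (h2 : T 2 ≤ (k : ℝ) - 1)
    (hrec : ∀ l, 3 ≤ l →
      T l ≤ betaR k l * ∏ i ∈ Finset.Icc 1 (l - 1), T i ^ (k - 1)) :
    ∀ l, 3 ≤ l →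
      T l ≤ ((k : ℝ) - 1) ^ ((k - 1) * k ^ (l - 3)) * betaR k l *
        ∏ i ∈ Finset.Icc 1 (l - 3), betaR k (l - i) ^ ((k - 1) * k ^ (i - 1)) := by
  intro l hl
  obtain ⟨n, rfl⟩ : ∃ n, l = n + 3 := ⟨l - 3, by omega⟩
  have hexp : ∀ j, (k - 1) * (k - 1 + 1) ^ j = (k - 1) * k ^ j := by
    rcases k with _ | k <;> simp
  have hbound := le_mul_boundFactor (fun i hi => (hpos i hi).le) (betaR_nonneg k) h1.le h2
    (fun n => by simpa using hrec (n + 3) (by omega)) n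
  simp only [boundFactor_eq_prod_Icc, hexp] at hbound
  rw [Nat.add_sub_cancel]
  exact hbound.trans_eq (by ring)

/-- The recursion `T_ℓ ≤ β_{k,ℓ} ∏_{i=1}^{ℓ-1} T_i^{k-1}` with `T_1 = 1`,
`T_2 ≤ k-1` implies the closed form
`T_ℓ ≤ (k-1)^{(k-1)k^{ℓ-3}} β_{k,ℓ} ∏_{i=1}^{ℓ-3} β_{k,ℓ-i}^{(k-1)k^{i-1}}`. -/
theorem stmt5 (k : ℕ) (hk : 2 ≤ k) (T : ℕ → ℝ)
    (hpos : ∀ i, 1 ≤ i → 0 < T i) (h1 : T 1 = 1) (h2 : T 2 ≤ (k : ℝ) - 1)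
    (hrec : ∀ l, 3 ≤ l →
      T l ≤ betaR k l * ∏ i ∈ Finset.Icc 1 (l - 1), T i ^ (k - 1)) :
    ∀ l, 3 ≤ l →
      T l ≤ ((k : ℝ) - 1) ^ ((k - 1) * k ^ (l - 3)) * betaR k l *
        ∏ i ∈ Finset.Icc 1 (l - 3), betaR k (l - i) ^ ((k - 1) * k ^ (i - 1)) :=
  stmt5_general k T hpos h1 h2 hrec
end

section
/- For k ≥ 2, the zigzag bound at level 4 satisfies Z_{zig}(4) < (N_{k,4} - 3)!, where Z_{zig}(4) = (k-1)^{(k-1)k} · β_{k,4} · β_{k,3}^{k-1}, N_{k,4} = k^3+k^2+k+1, β_{k,4} = A_4 · C(N_{k,4}-2, 4) · (N_{k,4}-6)! / [(N_{k,3}-1)!·(N_{k,3}!)^{k-2}·(N_{k,2}-1)!·(N_{k,2}!)^{k-2}], and β_{k,3} = A_3 · C(N_{k,3}-2, 3) / [(N_{k,2}-1)!·(N_{k,2}!)^{k-2}], with A_3 = 2, A_4 = 5. -/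
/-- `β_{k,4} = A_4·C(N_{k,4}-2,4)·(N_{k,4}-6)! /
[(N_{k,3}-1)!·(N_{k,3}!)^{k-2}·(N_{k,2}-1)!·(N_{k,2}!)^{k-2}]`. -/
noncomputable def beta4 (k : ℕ) : ℝ :=
  (zigzagNum 4 : ℝ) * (Nat.choose (Ncount k 4 - 2) 4 : ℝ) *
    ((Ncount k 4 - 6).factorial : ℝ) /
    (((Ncount k 3 - 1).factorial : ℝ) * ((Ncount k 3).factorial : ℝ) ^ (k - 2) *
      ((Ncount k 2 - 1).factorial : ℝ) * ((Ncount k 2).factorial : ℝ) ^ (k - 2))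

/-- `β_{k,3} = A_3·C(N_{k,3}-2,3) / [(N_{k,2}-1)!·(N_{k,2}!)^{k-2}]`. -/
noncomputable def beta3 (k : ℕ) : ℝ :=
  (zigzagNum 3 : ℝ) * (Nat.choose (Ncount k 3 - 2) 3 : ℝ) /
    (((Ncount k 2 - 1).factorial : ℝ) * ((Ncount k 2).factorial : ℝ) ^ (k - 2))

open Finset
open scoped Nat

lemma Ncount_eq_sum_range_pow {k : ℕ} (hk : 2 ≤ k) (l : ℕ) :
    Ncount k l = ∑ i ∈ range l, k ^ i :=
  (Nat.geomSum_eq hk l).symm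

lemma Ncount_two {k : ℕ} (hk : 2 ≤ k) : Ncount k 2 = k + 1 := by
  simp only [Ncount_eq_sum_range_pow hk, sum_range_succ, sum_range_zero]
  ring

lemma Ncount_three {k : ℕ} (hk : 2 ≤ k) : Ncount k 3 = k ^ 2 + k + 1 := by
  simp only [Ncount_eq_sum_range_pow hk, sum_range_succ, sum_range_zero]
  ring

lemma Ncount_four {k : ℕ} (hk : 2 ≤ k) : Ncount k 4 = k ^ 3 + k ^ 2 + k + 1 := by
  simp only [Ncount_eq_sum_range_pow hk, sum_range_succ, sum_range_zero]
  ring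

lemma isAlt_iff_forall_fin {n : ℕ} (f : Equiv.Perm (Fin n)) :
    IsAlt n f ↔ ∀ i j : Fin n, (j : ℕ) = i + 1 →
      if (i : ℕ) % 2 = 0 then f i < f j else f j < f i := by
  refine ⟨fun h i j hj => ?_, fun h i hi => h ⟨i, by omega⟩ ⟨i + 1, hi⟩ rfl⟩
  have hi : (i : ℕ) + 1 < n := hj ▸ j.isLt
  rw [show j = ⟨i + 1, hi⟩ from Fin.ext hj]
  exact h i hi

instance (n : ℕ) : DecidablePred (IsAlt n) := fun f =>
  decidable_of_iff _ (isAlt_iff_forall_fin f).symm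

lemma zigzagNum_three : zigzagNum 3 = 2 := by
  rw [zigzagNum, Nat.card_eq_fintype_card]
  decide

lemma zigzagNum_four : zigzagNum 4 = 5 := by
  rw [zigzagNum, Nat.card_eq_fintype_card]
  decide

def betaDenom (k l : ℕ) : ℕ := (Ncount k l - 1)! * (Ncount k l)! ^ (k - 2)

lemma betaDenom_pos (k l : ℕ) : 0 < betaDenom k l := by
  unfold betaDenom
  positivity

lemma beta3_eq (k : ℕ) :
    beta3 k = 2 * ((Ncount k 3 - 2).choose 3 : ℝ) / betaDenom k 2 := by
  rw [beta3, zigzagNum_three, betaDenom]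
  push_cast
  rfl

lemma beta4_eq (k : ℕ) :
    beta4 k = 5 * (((Ncount k 4 - 2).choose 4 * (Ncount k 4 - 6)! : ℕ) : ℝ) /
      (betaDenom k 3 * betaDenom k 2) := by
  rw [beta4, zigzagNum_four, betaDenom, betaDenom]
  push_cast
  ring

lemma pow_succ_le_factorial_two_mul (m : ℕ) : m ^ (m + 1) ≤ (2 * m)! := by
  rcases Nat.eq_zero_or_pos m with rfl | hm
  · simp
  · have h := Nat.factorial_mul_pow_le_factorial (m := m - 1) (n := m + 1)
    rw [Nat.sub_add_cancel hm, show m - 1 + (m + 1) = 2 * m by omega] at h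
    exact (Nat.le_mul_of_pos_left _ (Nat.factorial_pos _)).trans h

lemma choose_four_mul_factorial_eq {n : ℕ} (hn : 6 ≤ n) :
    24 * ((n - 2).choose 4 * (n - 6)!) = (n - 2) * (n - 3)! := by
  obtain ⟨m, rfl⟩ : ∃ m, n = m + 6 := ⟨n - 6, by omega⟩
  have h := Nat.add_choose_mul_factorial_mul_factorial m 4
  rw [show m + 6 - 2 = m + 4 by omega, show m + 6 - 6 = m by omega,
    show m + 6 - 3 = m + 3 by omega, ← Nat.factorial_succ, ← h, show (4 : ℕ)! = 24 from rfl]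
  ring

lemma pow_mul_two_mul_choose_le_factorial {k : ℕ} (hk : 2 ≤ k) :
    (k - 1) ^ k * (2 * (k ^ 2 + k - 1).choose 3) ≤ (k ^ 2 + k)! := by
  set n := k ^ 2 + k
  have hk2 : 2 * k ≤ k ^ 2 := by nlinarith
  have hpow : (k - 1) ^ k ≤ (n - 3)! := by
    have h := pow_succ_le_factorial_two_mul (k - 1)
    rw [Nat.sub_add_cancel (by omega)] at h
    exact h.trans (Nat.factorial_le (by omega))
  have hchoose : (n - 1).choose 3 ≤ n.choose 3 := by
    simpa [Nat.sub_add_cancel (show 1 ≤ n by omega)] using Nat.choose_le_succ (n - 1) 3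
  calc (k - 1) ^ k * (2 * (n - 1).choose 3) ≤ (n - 3)! * (n.choose 3 * 3!) :=
        Nat.mul_le_mul hpow (by rw [show (3 : ℕ)! = 6 from rfl]; omega)
    _ = n ! := by rw [← Nat.choose_mul_factorial_mul_factorial (show 3 ≤ n by omega)]; ring

lemma pow_le_betaDenom_three {k : ℕ} (hk : 2 ≤ k) :
    ((k - 1) ^ k * (2 * (Ncount k 3 - 2).choose 3)) ^ (k - 1) ≤ betaDenom k 3 := by
  have hx := pow_mul_two_mul_choose_le_factorial hk
  rw [betaDenom, Ncount_three hk, show k ^ 2 + k + 1 - 2 = k ^ 2 + k - 1 by omega,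
    Nat.add_sub_cancel]
  calc ((k - 1) ^ k * (2 * (k ^ 2 + k - 1).choose 3)) ^ (k - 1)
      = (k - 1) ^ k * (2 * (k ^ 2 + k - 1).choose 3) *
          ((k - 1) ^ k * (2 * (k ^ 2 + k - 1).choose 3)) ^ (k - 2) := by
        rw [← pow_succ']; congr 1; omega
    _ ≤ (k ^ 2 + k)! * (k ^ 2 + k + 1)! ^ (k - 2) :=
        Nat.mul_le_mul hx (Nat.pow_le_pow_left (hx.trans (Nat.factorial_le (by omega))) _)

lemma five_mul_lt_betaDenom_two_pow {k : ℕ} (hk : 2 ≤ k) :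
    5 * (Ncount k 4 - 2) < 24 * betaDenom k 2 ^ k := by
  have hden : k ^ k ≤ betaDenom k 2 ^ k := by
    refine Nat.pow_le_pow_left ?_ k
    rw [betaDenom, Ncount_two hk, Nat.add_sub_cancel]
    exact (Nat.self_le_factorial k).trans (Nat.le_mul_of_pos_right _ (by positivity))
  obtain ⟨j, rfl⟩ : ∃ j, k = j + 2 := ⟨k - 2, by omega⟩
  have hpow : j + 1 ≤ (j + 2) ^ j := Nat.lt_pow_self (by omega)
  have hpow' : (j + 2) ^ 2 * (j + 1) ≤ (j + 2) ^ (j + 2) := by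
    rw [pow_add, mul_comm]; exact Nat.mul_le_mul_right _ hpow
  rw [Ncount_four hk, show (j + 2) ^ 3 + (j + 2) ^ 2 + (j + 2) + 1 - 2 =
    (j + 2) ^ 3 + (j + 2) ^ 2 + j + 1 by omega]
  nlinarith

lemma sub_one_pow_mul_beta4_mul_beta3_pow_eq {k : ℕ} (hk : 2 ≤ k) :
    ((k : ℝ) - 1) ^ ((k - 1) * k) * beta4 k * beta3 k ^ (k - 1) =
      (((k - 1) ^ k * (2 * (Ncount k 3 - 2).choose 3)) ^ (k - 1) : ℕ) / betaDenom k 3 *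
        (5 * (((Ncount k 4 - 2).choose 4 * (Ncount k 4 - 6)! : ℕ) : ℝ) / betaDenom k 2 ^ k) := by
  have hL2 : (betaDenom k 2 : ℝ) ≠ 0 := mod_cast (betaDenom_pos k 2).ne'
  have hL3 : (betaDenom k 3 : ℝ) ≠ 0 := mod_cast (betaDenom_pos k 3).ne'
  have hL2k : (betaDenom k 2 : ℝ) ^ k = betaDenom k 2 * betaDenom k 2 ^ (k - 1) := by
    rw [← pow_succ', Nat.sub_add_cancel (by omega)]
  push_cast [Nat.cast_sub (show 1 ≤ k by omega)]
  rw [beta4_eq, beta3_eq, hL2k, mul_pow, ← pow_mul, mul_comm k, div_pow]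
  field_simp
  push_cast
  ring

/-- For `k ≥ 2` the zigzag bound at level 4 satisfies
`Z_{zig}(4) = (k-1)^{(k-1)k}·β_{k,4}·β_{k,3}^{k-1} < (N_{k,4}-3)!`,
where `N_{k,4} = k³+k²+k+1`, `A_3 = 2` and `A_4 = 5`. -/
theorem stmt11 (k : ℕ) (hk : 2 ≤ k) :
    zigzagNum 3 = 2 ∧ zigzagNum 4 = 5 ∧
    Ncount k 4 = k ^ 3 + k ^ 2 + k + 1 ∧
    ((k : ℝ) - 1) ^ ((k - 1) * k) * beta4 k * beta3 k ^ (k - 1) <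
      ((Ncount k 4 - 3).factorial : ℝ) := by
  refine ⟨zigzagNum_three, zigzagNum_four, Ncount_four hk, ?_⟩
  have hN : 6 ≤ Ncount k 4 := by rw [Ncount_four hk]; nlinarith
  have hL2 : (0 : ℝ) < betaDenom k 2 := mod_cast betaDenom_pos k 2
  have hL3 : (0 : ℝ) < betaDenom k 3 := mod_cast betaDenom_pos k 3
  rw [sub_one_pow_mul_beta4_mul_beta3_pow_eq hk]
  calc _ ≤ 1 * (5 * (((Ncount k 4 - 2).choose 4 * (Ncount k 4 - 6)! : ℕ) : ℝ) /
            betaDenom k 2 ^ k) := by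
        gcongr
        rw [div_le_one hL3]
        exact_mod_cast pow_le_betaDenom_three hk
    _ = 5 * (Ncount k 4 - 2 : ℕ) / (24 * betaDenom k 2 ^ k) * (Ncount k 4 - 3)! := by
        have h := congrArg (Nat.cast : ℕ → ℝ) (choose_four_mul_factorial_eq hN)
        push_cast at h ⊢
        field_simp
        linarith
    _ < 1 * (Ncount k 4 - 3)! := by
        gcongr
        rw [div_lt_one (by positivity)]
        exact_mod_cast five_mul_lt_betaDenom_two_pow hk
    _ = (Ncount k 4 - 3)! := one_mul _
end

section
/- In unlabeled chip-firing on the infinite k-ary tree with a self-loop at the root, starting with N chips at the root where (k^ℓ-1)/(k-1) ≤ N < (k^{ℓ+1}-1)/(k-1), the stable configuration places a_i + 1 chips on each vertex of layer i+1 for 0 ≤ i ≤ ℓ-1, where a_{ℓ-1}⋯a_1a_0 is the base-k expansion of N - (k^ℓ-1)/(k-1). In particular, the total chip count is conserved: N = ∑_{i=0}^{ℓ-1} (a_i + 1)·k^i. -/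
/-- The parent of vertex `v`; the root is its own parent (self-loop). -/
def par (k v : ℕ) : ℕ := if v = 0 then 0 else (v - 1) / k

/-- The number of edges from vertex `v` to vertex `w` (as a neighbor to which a
fired chip is sent): one if `w` is the parent of `v` (including the root's
self-loop) and one if `w` is a child of `v`. -/
def nbr (k v w : ℕ) : ℕ :=
  (if w = par k v then 1 else 0) + (if k * v + 1 ≤ w ∧ w ≤ k * v + k then 1 else 0)

/-- The result of firing vertex `v`: `v` loses `k+1` chips and each of its
`k+1` incident edges (counting the root's self-loop) carries one chip to the
corresponding endpoint. -/
def fireAt (k v : ℕ) (c : ℕ → ℕ) : ℕ → ℕ :=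
  fun w => c w + nbr k v w - (if w = v then k + 1 else 0)

/-- One legal unlabeled chip-firing move: some vertex with at least `k+1`
chips fires. -/
def UStep (k : ℕ) (c c' : ℕ → ℕ) : Prop := ∃ v, k + 1 ≤ c v ∧ c' = fireAt k v c

/-- A configuration is stable when every vertex has at most `k` chips. -/
def UStable (k : ℕ) (c : ℕ → ℕ) : Prop := ∀ v, c v ≤ k

/-!
Firing every vertex of depth `j + 1` sends `k` chips per vertex up to depth `j` and one down to
depth `j + 2`. Firing the layers at depths `j, j - 1, …, 0` in turn is therefore legal as soon as
depth `j` carries `k` extra chips per vertex and all shallower layers are nonempty, and its net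
effect is a base-`k` carry: `k` chips per vertex at depth `j` become one chip per vertex at depth
`j + 1`. Carrying the `N` chips from the root downwards, depth by depth, leaves the radial
configuration whose layer values are the digits `a_i + 1 ∈ [1, k]` of `N` in bijective base `k`.
It is stable, and since distinct firings commute it is the only reachable stable configuration.
-/

open Finset

section

variable {k : ℕ}

theorem Ncount_eq_sum (hk : 2 ≤ k) (i : ℕ) : Ncount k i = ∑ j ∈ range i, k ^ j :=
  (Nat.geomSum_eq hk i).symm

theorem Ncount_succ (hk : 2 ≤ k) (i : ℕ) : Ncount k (i + 1) = k * Ncount k i + 1 := by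
  rw [Ncount_eq_sum hk, Ncount_eq_sum hk, sum_range_succ', mul_sum]
  simp [pow_succ, mul_comm]

theorem Ncount_le_iff (hk : 2 ≤ k) {i v : ℕ} : Ncount k i ≤ v ↔ k ^ i ≤ (k - 1) * v + 1 := by
  have hgeom := geom_sum_mul_add (k - 1) i
  rw [Nat.sub_add_cancel (by omega : 1 ≤ k)] at hgeom
  rw [Ncount_eq_sum hk, ← hgeom, ← Nat.mul_le_mul_right_iff (by omega : 0 < k - 1)]
  constructor <;> intro h <;> nlinarith

/-- Depth `i` is layer `i + 1` of the paper. -/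
def depth (k v : ℕ) : ℕ := Nat.log k ((k - 1) * v + 1)

theorem le_depth_iff (hk : 2 ≤ k) {i v : ℕ} : i ≤ depth k v ↔ Ncount k i ≤ v := by
  rw [depth, Nat.le_log_iff_pow_le (by omega) (by omega), Ncount_le_iff hk]

theorem depth_eq_iff (hk : 2 ≤ k) {i v : ℕ} :
    depth k v = i ↔ Ncount k i ≤ v ∧ v < Ncount k (i + 1) := by
  rw [← le_depth_iff hk, ← not_le, ← le_depth_iff hk]
  omega

theorem depth_eq_zero_iff (hk : 2 ≤ k) {v : ℕ} : depth k v = 0 ↔ v = 0 := by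
  have h := (le_depth_iff hk (i := 1) (v := v))
  rw [Ncount_succ hk, show Ncount k 0 = 0 by simp [Ncount]] at h
  omega

theorem par_eq_iff (hk : 2 ≤ k) {v w : ℕ} (hv : v ≠ 0) :
    par k v = w ↔ k * w + 1 ≤ v ∧ v ≤ k * w + k := by
  rw [par, if_neg hv, Nat.div_eq_iff (by omega), mul_comm w k]
  omega

theorem succ_le_depth_iff (hk : 2 ≤ k) {v : ℕ} (hv : v ≠ 0) (i : ℕ) :
    i + 1 ≤ depth k v ↔ i ≤ depth k (par k v) := by
  rw [le_depth_iff hk, le_depth_iff hk, Ncount_succ hk, par, if_neg hv,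
    Nat.le_div_iff_mul_le (by omega), mul_comm]
  omega

theorem depth_par (hk : 2 ≤ k) {v : ℕ} (hv : v ≠ 0) : depth k (par k v) + 1 = depth k v := by
  have hle := (succ_le_depth_iff hk hv _).2 le_rfl
  have hpos := (succ_le_depth_iff hk hv 0).2 (Nat.zero_le _)
  have hge := (succ_le_depth_iff hk hv (depth k v - 1)).1 (by omega)
  omega

theorem depth_eq_succ_iff (hk : 2 ≤ k) {v i : ℕ} :
    depth k v = i + 1 ↔ v ≠ 0 ∧ depth k (par k v) = i := by
  constructor
  · intro h
    have hv : v ≠ 0 := by rintro rfl; rw [(depth_eq_zero_iff hk).2 rfl] at h; omega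
    exact ⟨hv, by have := depth_par hk hv; omega⟩
  · rintro ⟨hv, rfl⟩
    exact (depth_par hk hv).symm

theorem nbr_eq (hk : 2 ≤ k) (v w : ℕ) :
    nbr k v w = (if w = par k v then 1 else 0) + (if w ≠ 0 ∧ par k w = v then 1 else 0) := by
  rcases eq_or_ne w 0 with rfl | hw
  · simp [nbr]
  · simp only [nbr, par_eq_iff hk hw, ne_eq, hw, not_false_eq_true, true_and]

def layer (k i : ℕ) : Finset ℕ := Ico (Ncount k i) (Ncount k (i + 1))

theorem mem_layer (hk : 2 ≤ k) {i v : ℕ} : v ∈ layer k i ↔ depth k v = i := by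
  rw [layer, mem_Ico, depth_eq_iff hk]

theorem layer_zero (hk : 2 ≤ k) : layer k 0 = {0} := by
  ext v
  rw [mem_layer hk, depth_eq_zero_iff hk, mem_singleton]

theorem sum_layer_child (hk : 2 ≤ k) (i w : ℕ) :
    ∑ v ∈ layer k i, (if w ≠ 0 ∧ par k w = v then 1 else 0) =
      if depth k w = i + 1 then 1 else 0 := by
  simp only [depth_eq_succ_iff hk, ← mem_layer hk]
  by_cases hw : w = 0 <;> simp [hw]

theorem sum_layer_parent (hk : 2 ≤ k) (i w : ℕ) :
    ∑ v ∈ layer k (i + 1), (if w = par k v then 1 else 0) = if depth k w = i then k else 0 := by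
  split_ifs with hw
  · have hchildren :
        (layer k (i + 1)).filter (fun v => w = par k v) = Ico (k * w + 1) (k * w + k + 1) := by
      ext v
      simp only [mem_filter, mem_layer hk, depth_eq_succ_iff hk, mem_Ico]
      constructor
      · rintro ⟨⟨hv, -⟩, rfl⟩
        have := (par_eq_iff hk hv).1 rfl
        omega
      · intro h
        have hv : v ≠ 0 := by omega
        have hpar := (par_eq_iff hk hv (w := w)).2 (by omega)
        exact ⟨⟨hv, hpar ▸ hw⟩, hpar.symm⟩
    rw [sum_boole, hchildren, Nat.card_Ico, Nat.cast_id]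
    omega
  · refine sum_eq_zero fun v hv => if_neg ?_
    rintro rfl
    exact hw ((depth_eq_succ_iff hk).1 ((mem_layer hk).1 hv)).2

def radial (k : ℕ) (g : ℕ → ℕ) : ℕ → ℕ := fun v => g (depth k v)

theorem radial_add (f g : ℕ → ℕ) : radial k (f + g) = radial k f + radial k g := rfl

theorem radial_nsmul (m : ℕ) (g : ℕ → ℕ) : radial k (m • g) = m • radial k g := rfl

theorem radial_single (hk : 2 ≤ k) (i : ℕ) :
    radial k (Pi.single i 1) = ∑ v ∈ layer k i, Pi.single v 1 := by
  ext w
  simp [radial, Pi.single_apply, mem_layer hk]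

theorem sum_nbr_layer_zero (hk : 2 ≤ k) :
    ∑ v ∈ layer k 0, nbr k v = radial k (Pi.single 0 1 + Pi.single 1 1) := by
  ext w
  simp only [Finset.sum_apply, nbr_eq hk, sum_add_distrib, sum_layer_child hk]
  simp [layer_zero hk, radial, Pi.single_apply, par, depth_eq_zero_iff hk]

theorem sum_nbr_layer_succ (hk : 2 ≤ k) (i : ℕ) :
    ∑ v ∈ layer k (i + 1), nbr k v = radial k (k • Pi.single i 1 + Pi.single (i + 2) 1) := by
  ext w
  simp only [Finset.sum_apply, nbr_eq hk, sum_add_distrib, sum_layer_child hk,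
    sum_layer_parent hk]
  simp [radial, Pi.single_apply]

theorem uStep_add_single (c : ℕ → ℕ) (v : ℕ) :
    UStep k (c + (k + 1) • Pi.single v 1) (c + nbr k v) := by
  refine ⟨v, by simp, ?_⟩
  ext w
  simp only [fireAt, Pi.add_apply, Pi.smul_apply, Pi.single_apply, smul_eq_mul]
  split_ifs <;> omega

theorem reflTransGen_fire_finset (S : Finset ℕ) (c : ℕ → ℕ) :
    Relation.ReflTransGen (UStep k) (c + (k + 1) • ∑ v ∈ S, Pi.single v 1)
      (c + ∑ v ∈ S, nbr k v) := by
  induction S using Finset.induction_on generalizing c with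
  | empty => simpa using Relation.ReflTransGen.refl
  | insert v S hv ih =>
    have hstep := uStep_add_single (k := k) (c + ∑ v ∈ S, nbr k v) v
    rw [add_right_comm] at hstep
    convert (ih (c + (k + 1) • Pi.single v 1)).tail hstep using 1
    · rw [sum_insert hv, smul_add, add_assoc]
    · rw [sum_insert hv, add_comm (nbr k v), add_assoc]

theorem reflTransGen_fire_layer (hk : 2 ≤ k) (i : ℕ) (h : ℕ → ℕ) :
    Relation.ReflTransGen (UStep k) (radial k (h + (k + 1) • Pi.single i 1))
      (radial k h + ∑ v ∈ layer k i, nbr k v) := by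
  rw [radial_add, radial_nsmul, radial_single hk]
  exact reflTransGen_fire_finset _ _

theorem exists_eq_add_single {g : ℕ → ℕ} {j : ℕ} (hj : 1 ≤ g j) :
    ∃ g' : ℕ → ℕ, g = g' + Pi.single j 1 ∧ ∀ i ≠ j, g' i = g i :=
  ⟨g - Pi.single j 1, by ext i; by_cases hi : i = j <;> simp [hi]; omega,
    fun i hi => by simp [hi]⟩

theorem reflTransGen_carry (hk : 2 ≤ k) (j : ℕ) (h : ℕ → ℕ) (hpos : ∀ i ≤ j, 1 ≤ h i) :
    Relation.ReflTransGen (UStep k) (radial k (h + k • Pi.single j 1))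
      (radial k (h + Pi.single (j + 1) 1)) := by
  obtain ⟨h', rfl, hh'⟩ := exists_eq_add_single (hpos j le_rfl)
  have hfire := reflTransGen_fire_layer hk j h'
  cases j with
  | zero =>
    rw [sum_nbr_layer_zero hk, ← radial_add] at hfire
    convert hfire using 2 <;> module
  | succ j =>
    rw [sum_nbr_layer_succ hk, ← radial_add] at hfire
    have hcarry := reflTransGen_carry hk j (h' + Pi.single (j + 2) 1) fun i hi =>
      le_add_right ((hh' i (by omega)).symm ▸ hpos i (by omega))
    rw [add_right_comm, add_assoc] at hcarry
    convert hfire.trans hcarry using 2 <;> module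

theorem reflTransGen_carry_iter (hk : 2 ≤ k) (j q : ℕ) (h : ℕ → ℕ)
    (hpos : ∀ i ≤ j, 1 ≤ h i) :
    Relation.ReflTransGen (UStep k) (radial k (h + (k * q) • Pi.single j 1))
      (radial k (h + q • Pi.single (j + 1) 1)) := by
  induction q generalizing h with
  | zero => simpa using Relation.ReflTransGen.refl
  | succ q ih =>
    have hcarry := reflTransGen_carry hk j (h + (k * q) • Pi.single j 1) fun i hi =>
      le_add_right (hpos i hi)
    have hrest := ih (h + Pi.single (j + 1) 1) fun i hi => le_add_right (hpos i hi)
    rw [add_right_comm] at hrest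
    convert hcarry.trans hrest using 2 <;> module

theorem reflTransGen_digits (hk : 2 ≤ k) (l : ℕ) (b : ℕ → ℕ) (hb : ∀ i < l, 1 ≤ b i)
    (j : ℕ) (g : ℕ → ℕ) (hg : ∀ i < j, 1 ≤ g i) :
    Relation.ReflTransGen (UStep k)
      (radial k (g + (∑ i ∈ range l, b i * k ^ i) • Pi.single j 1))
      (radial k (g + ∑ i ∈ range l, b i • Pi.single (j + i) 1)) := by
  induction l generalizing b j g with
  | zero => simpa using Relation.ReflTransGen.refl
  | succ l ih =>
    have hvalue :
        ∑ i ∈ range (l + 1), b i * k ^ i = b 0 + k * ∑ i ∈ range l, b (i + 1) * k ^ i := by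
      rw [sum_range_succ', mul_sum, add_comm, pow_zero, mul_one]
      exact congrArg _ (sum_congr rfl fun i _ => by ring)
    have hpos : ∀ i < j + 1, 1 ≤ (g + b 0 • Pi.single j 1 : ℕ → ℕ) i := fun i hi => by
      rcases Nat.lt_succ_iff_lt_or_eq.1 hi with hi | rfl
      · exact le_add_right (hg i hi)
      · simpa using le_add_left (hb 0 (by omega))
    have hcarry := reflTransGen_carry_iter hk j (∑ i ∈ range l, b (i + 1) * k ^ i)
      (g + b 0 • Pi.single j 1) fun i hi => hpos i (by omega)
    have hrest := ih (fun i => b (i + 1)) (fun i hi => hb (i + 1) (by omega)) (j + 1) _ hpos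
    rw [hvalue, sum_range_succ']
    convert hcarry.trans hrest using 2
    · module
    · simp only [add_assoc, add_zero, add_comm 1]
      abel

theorem reflTransGen_root_digits (hk : 2 ≤ k) (l : ℕ) (b : ℕ → ℕ) (hb : ∀ i < l, 1 ≤ b i) :
    Relation.ReflTransGen (UStep k) (fun w => if w = 0 then ∑ i ∈ range l, b i * k ^ i else 0)
      (radial k fun i => if i < l then b i else 0) := by
  have hstart : radial k ((∑ i ∈ range l, b i * k ^ i) • Pi.single 0 1) =
      fun w => if w = 0 then ∑ i ∈ range l, b i * k ^ i else 0 := by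
    ext w
    simp [radial, Pi.single_apply, depth_eq_zero_iff hk]
  have hend :
      (∑ i ∈ range l, b i • Pi.single i 1 : ℕ → ℕ) = fun i => if i < l then b i else 0 := by
    ext i
    simp [Pi.single_apply]
  have hdigits := reflTransGen_digits hk l b hb 0 0 (by simp)
  simp only [zero_add] at hdigits
  rwa [hstart, hend] at hdigits

theorem fireAt_comm {v w : ℕ} {c : ℕ → ℕ} (hv : k + 1 ≤ c v) (hw : k + 1 ≤ c w)
    (hvw : v ≠ w) :
    fireAt k w (fireAt k v c) = fireAt k v (fireAt k w c) := by
  ext u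
  rcases eq_or_ne u v with rfl | huv <;> rcases eq_or_ne u w with rfl | huw <;>
    simp only [fireAt] <;> split_ifs <;> omega

theorem le_fireAt_of_ne {v w : ℕ} (c : ℕ → ℕ) (hvw : v ≠ w) : c w ≤ fireAt k v c w := by
  simp [fireAt, hvw.symm]

theorem uStep_diamond {c c₁ c₂ : ℕ → ℕ} (h₁ : UStep k c c₁) (h₂ : UStep k c c₂) :
    ∃ d, Relation.ReflGen (UStep k) c₁ d ∧ Relation.ReflTransGen (UStep k) c₂ d := by
  obtain ⟨v, hv, rfl⟩ := h₁
  obtain ⟨w, hw, rfl⟩ := h₂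
  rcases eq_or_ne v w with rfl | hvw
  · exact ⟨_, .refl, .refl⟩
  · refine ⟨fireAt k w (fireAt k v c), .single ⟨w, hw.trans (le_fireAt_of_ne c hvw), rfl⟩,
      .single ⟨v, hv.trans (le_fireAt_of_ne c hvw.symm), fireAt_comm hv hw hvw⟩⟩

theorem UStable.eq_of_reflTransGen {c d : ℕ → ℕ} (hc : UStable k c)
    (h : Relation.ReflTransGen (UStep k) c d) : d = c := by
  rcases h.cases_head with rfl | ⟨e, ⟨v, hv, -⟩, -⟩
  · rfl
  · exact absurd (hc v) (by omega)

theorem eq_of_reflTransGen_of_uStable {c d₁ d₂ : ℕ → ℕ}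
    (h₁ : Relation.ReflTransGen (UStep k) c d₁) (h₂ : Relation.ReflTransGen (UStep k) c d₂)
    (hs₁ : UStable k d₁) (hs₂ : UStable k d₂) : d₁ = d₂ := by
  obtain ⟨e, h₁e, h₂e⟩ := Relation.church_rosser (fun _ _ _ => uStep_diamond) h₁ h₂
  rw [← hs₁.eq_of_reflTransGen h₁e, hs₂.eq_of_reflTransGen h₂e]

end

theorem stmt13_general (k l N : ℕ) (a : ℕ → ℕ) (hk : 2 ≤ k)
    (hN1 : Ncount k l ≤ N)
    (ha : ∀ i, i < l → a i ≤ k - 1)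
    (hexp : N - Ncount k l = ∑ i ∈ Finset.range l, a i * k ^ i)
    (c : ℕ → ℕ)
    (hreach : Relation.ReflTransGen (UStep k) (fun w => if w = 0 then N else 0) c)
    (hstable : UStable k c) :
    (∀ i, i < l → ∀ v, Ncount k i ≤ v → v < Ncount k (i + 1) → c v = a i + 1) ∧
    (∀ v, Ncount k l ≤ v → c v = 0) ∧
    N = ∑ i ∈ Finset.range l, (a i + 1) * k ^ i := by
  have hN : N = ∑ i ∈ range l, (a i + 1) * k ^ i := by
    simp only [add_mul, one_mul, sum_add_distrib, ← hexp, ← Ncount_eq_sum hk]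
    omega
  have hdigits := reflTransGen_root_digits hk l (fun i => a i + 1) fun _ _ => by omega
  rw [← hN] at hdigits
  have hc : c = radial k fun i => if i < l then a i + 1 else 0 :=
    eq_of_reflTransGen_of_uStable hreach hdigits hstable fun v => by
      dsimp only [radial]
      split_ifs with h
      · have := ha _ h; omega
      · omega
  refine ⟨fun i hi v hv₁ hv₂ => ?_, fun v hv => ?_, hN⟩
  · rw [hc, radial, (depth_eq_iff hk).2 ⟨hv₁, hv₂⟩, if_pos hi]
  · rw [hc, radial, if_neg (not_lt.2 ((le_depth_iff hk).2 hv))]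

/-- Starting with `N` chips at the root, `(k^ℓ-1)/(k-1) ≤ N < (k^{ℓ+1}-1)/(k-1)`,
any reachable stable configuration has `a_i + 1` chips on each vertex of layer
`i+1` for `0 ≤ i ≤ ℓ-1` (and no chips below layer `ℓ`), where
`a_{ℓ-1}⋯a_1a_0` is the base-`k` expansion of `N - (k^ℓ-1)/(k-1)`.
In particular `N = ∑_{i=0}^{ℓ-1} (a_i+1)·k^i`. -/
theorem stmt13 (k l N : ℕ) (a : ℕ → ℕ) (hk : 2 ≤ k) (hl : 1 ≤ l)
    (hN1 : Ncount k l ≤ N) (hN2 : N < Ncount k (l + 1))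
    (ha : ∀ i, i < l → a i ≤ k - 1)
    (hexp : N - Ncount k l = ∑ i ∈ Finset.range l, a i * k ^ i)
    (c : ℕ → ℕ)
    (hreach : Relation.ReflTransGen (UStep k) (fun w => if w = 0 then N else 0) c)
    (hstable : UStable k c) :
    (∀ i, i < l → ∀ v, Ncount k i ≤ v → v < Ncount k (i + 1) → c v = a i + 1) ∧
    (∀ v, Ncount k l ≤ v → c v = 0) ∧
    N = ∑ i ∈ Finset.range l, (a i + 1) * k ^ i :=
  stmt13_general k l N a hk hN1 ha hexp c hreach hstable
end
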